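/- Let J be closed and η, τ, ρ ∈ J*. If λ_{η'} = x_τ⁻¹ · λ_η · x_ρ⁻¹, then for all (j,k) ∈ J, η'_{jk} = η_{jk} + Σ_{(i,j,k)∈𝒫} τ_{ij} η_{ik} + Σ_{(j,k,l)∈𝒫} η_{jl} ρ_{kl} + Σ_{(i,j,k,l)∈𝒫} τ_{ij} η_{il} ρ_{kl}. -/

import Mathlib

/-
Evaluate the hypothesis at the indicator φ of (j,k), for which X_φ = E_jk and λ_{η'}(X_φ) = η'_{jk}.
With T = X_τ and R = X_ρ, x_τ E_jk x_ρ = E_jk + T E_jk + E_jk R + T E_jk R. As J is closed, 𝔫_J is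
closed under multiplication, so each term M is supported on J and λ_η(M) = Σ_{a,b} η_ab M_ab;
since (T E_jk R)_ab = T_aj R_kb, these four sums are the four terms of the formula.
-/

open Matrix BigOperators

namespace SCT

/-- Pairs of indices. -/
abbrev Pr (n : ℕ) := Fin n × Fin n

/-- A closed subset `J ⊆ {(i,j) : i < j}`:  `(i,j) ∈ J` and `(j,k) ∈ J` imply `(i,k) ∈ J`. -/
def Closed {n : ℕ} (J : Finset (Pr n)) : Prop :=
  (∀ p ∈ J, p.1 < p.2) ∧
  ∀ i j k : Fin n, (i, j) ∈ J → (j, k) ∈ J → (i, k) ∈ J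

variable {F : Type*} [Field F] [Fintype F] [DecidableEq F] {n : ℕ}

/-- `X_φ = Σ_{(i,j) ∈ J} φ_{ij} X_{ij}`. -/
def Xmat (J : Finset (Pr n)) (φ : Pr n → F) : Matrix (Fin n) (Fin n) F :=
  Matrix.of fun i j => if (i, j) ∈ J then φ (i, j) else 0

/-- `x_φ = 1 + X_φ`. -/
def xmat (J : Finset (Pr n)) (φ : Pr n → F) : Matrix (Fin n) (Fin n) F :=
  1 + Xmat J φ

/-- `x_{ij}(t) = 1 + t X_{ij}`. -/
def xelt (i j : Fin n) (t : F) : Matrix (Fin n) (Fin n) F :=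
  1 + Matrix.single i j t

/-- The pattern group `U_J`, as a set of matrices: ones on the diagonal, entries off the
diagonal vanish outside `J`. -/
def UJ (J : Finset (Pr n)) : Set (Matrix (Fin n) (Fin n) F) :=
  {M | (∀ i, M i i = 1) ∧ ∀ i j : Fin n, i ≠ j → (i, j) ∉ J → M i j = 0}

/-- `𝔫_J`: matrices supported on `J`. -/
def nJset (J : Finset (Pr n)) : Set (Matrix (Fin n) (Fin n) F) :=
  {M | ∀ i j : Fin n, (i, j) ∉ J → M i j = 0}

/-- The functional `λ_η` evaluated at a matrix of `𝔫_J`. -/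
def lam (J : Finset (Pr n)) (η : Pr n → F) (X : Matrix (Fin n) (Fin n) F) : F :=
  ∑ p ∈ J, η p * X p.1 p.2

/-- A functional with coefficients indexed by `J` evaluated at a matrix. -/
def lamSub (J : Finset (Pr n)) (η : {p // p ∈ J} → F) (X : Matrix (Fin n) (Fin n) F) : F :=
  ∑ p ∈ J.attach, η p * X p.1.1 p.1.2

/-- The two-sided orbit `O_φ = U_J X_φ U_J ⊆ 𝔫_J`. -/
def biOrbit (J : Finset (Pr n)) (φ : Pr n → F) : Set (Matrix (Fin n) (Fin n) F) :=
  {Y | ∃ u v : Matrix (Fin n) (Fin n) F, u ∈ UJ J ∧ v ∈ UJ J ∧ Y = u * Xmat J φ * v}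

/-- `(M_φ^R)_{(i,l),(j,k)} = φ_{ij}` if `k = l` and `(i,j,l) ∈ 𝒫`, else `0`. -/
def MphiR (J : Finset (Pr n)) (φ : Pr n → F) : Matrix {p // p ∈ J} {p // p ∈ J} F :=
  Matrix.of fun p q =>
    if q.1.2 = p.1.2 ∧ (p.1.1, q.1.1) ∈ J ∧ (q.1.1, p.1.2) ∈ J then φ (p.1.1, q.1.1) else 0

/-- `(M_φ^L)_{(i,l),(j,k)} = φ_{kl}` if `i = j` and `(i,k,l) ∈ 𝒫`, else `0`. -/
def MphiL (J : Finset (Pr n)) (φ : Pr n → F) : Matrix {p // p ∈ J} {p // p ∈ J} F :=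
  Matrix.of fun p q =>
    if q.1.1 = p.1.1 ∧ (p.1.1, q.1.2) ∈ J ∧ (q.1.2, p.1.2) ∈ J then φ (q.1.2, p.1.2) else 0

/-- `(M_L^η)_{(j,k),(i,l)} = η_{ik}` if `l = j` and `(i,j,k) ∈ 𝒫`, else `0`. -/
def MetaL (J : Finset (Pr n)) (η : Pr n → F) : Matrix {p // p ∈ J} {p // p ∈ J} F :=
  Matrix.of fun p q =>
    if q.1.2 = p.1.1 ∧ (q.1.1, p.1.1) ∈ J ∧ (p.1.1, p.1.2) ∈ J then η (q.1.1, p.1.2) else 0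

/-- `(M_R^η)_{(j,k),(i,l)} = η_{jl}` if `k = i` and `(j,k,l) ∈ 𝒫`, else `0`. -/
def MetaR (J : Finset (Pr n)) (η : Pr n → F) : Matrix {p // p ∈ J} {p // p ∈ J} F :=
  Matrix.of fun p q =>
    if q.1.1 = p.1.2 ∧ (p.1.1, p.1.2) ∈ J ∧ (p.1.2, q.1.2) ∈ J then η (p.1.1, q.1.2) else 0

/-- `corank(η) = rank(M_L^η)`. -/
noncomputable def corank (J : Finset (Pr n)) (η : Pr n → F) : ℕ := (MetaL J η).rank

/-- `(M_φ^η)_{(i,j),(k,l)} = φ_{jk} η_{il}` if `(i,j,k,l) ∈ 𝒫`, else `0`. -/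
def Mmesh (J : Finset (Pr n)) (φ η : Pr n → F) : Matrix {p // p ∈ J} {p // p ∈ J} F :=
  Matrix.of fun p q =>
    if (p.1.2, q.1.1) ∈ J then φ (p.1.2, q.1.1) * η (p.1.1, q.1.2) else 0

/-- `(a_φ^η)_{(i,j)} = Σ_{(i,j,k) ∈ 𝒫} φ_{jk} η_{ik}`. -/
def aVec (J : Finset (Pr n)) (φ η : Pr n → F) : {p // p ∈ J} → F :=
  fun p => ∑ k : Fin n, if (p.1.2, k) ∈ J then φ (p.1.2, k) * η (p.1.1, k) else 0

/-- `(b_φ^η)_{(j,k)} = Σ_{(i,j,k) ∈ 𝒫} φ_{ij} η_{ik}`. -/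
def bVec (J : Finset (Pr n)) (φ η : Pr n → F) : {p // p ∈ J} → F :=
  fun p => ∑ i : Fin n, if (i, p.1.1) ∈ J then φ (i, p.1.1) * η (i, p.1.2) else 0

/-- `φ` meshes with `η`. -/
def Meshes (J : Finset (Pr n)) (φ η : Pr n → F) : Prop :=
  (∃ b : {p // p ∈ J} → F, (Mmesh J φ η).mulVec b = -aVec J φ η) ∧
  ∀ v : {p // p ∈ J} → F, (Mmesh J φ η).mulVec v = 0 → bVec J φ η ⬝ᵥ v = 0

/-- The supercharacter `χ^η` evaluated at `x_φ`. -/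
noncomputable def superchar (J : Finset (Pr n)) (θ : AddChar F ℂ) (η φ : Pr n → F) : ℂ :=
  ((Fintype.card F : ℂ) ^ corank J η / (Nat.card (biOrbit J φ) : ℂ)) *
    ∑ᶠ Y ∈ biOrbit J φ, (starRingEnd ℂ) (θ (lam J η Y))

/-- `χ` restricted to `U` is the character of an irreducible complex representation of `U`. -/
def IsIrredCharOn (U : Set (Matrix (Fin n) (Fin n) F))
    (χ : Matrix (Fin n) (Fin n) F → ℂ) : Prop :=
  ∃ d : ℕ, 0 < d ∧ ∃ ρ : Matrix (Fin n) (Fin n) F → Matrix (Fin d) (Fin d) ℂ,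
    ρ 1 = 1 ∧
    (∀ A ∈ U, ∀ B ∈ U, ρ (A * B) = ρ A * ρ B) ∧
    (∀ W : Submodule ℂ (Fin d → ℂ), (∀ A ∈ U, ∀ w ∈ W, (ρ A).mulVec w ∈ W) → W = ⊥ ∨ W = ⊤) ∧
    ∀ A ∈ U, (ρ A).trace = χ A

/-- The full set of positive roots. -/
def Jfull (n : ℕ) : Finset (Pr n) := Finset.univ.filter fun p : Pr n => p.1 < p.2

/-!  The total order and partial sum on positive roots. -/

/-- `α < β` in the total order: `(r,s) < (i,j)` iff `r > i`, or `r = i` and `s > j`. -/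
def rlt {n : ℕ} (a b : Pr n) : Prop := b.1 < a.1 ∨ (a.1 = b.1 ∧ b.2 < a.2)

/-- `α + β` is defined in `R⁺`. -/
def rdef {n : ℕ} (a b : Pr n) : Prop := a.2 = b.1 ∨ b.2 = a.1

/-- The sum `α + β` (when defined). -/
def rsum {n : ℕ} (a b : Pr n) : Pr n := if a.2 = b.1 then (a.1, b.2) else (b.1, a.2)

/-! Algebra groups. -/

/-- The algebra group `H = 1 + 𝔫`. -/
def algH (nn : Submodule F (Matrix (Fin n) (Fin n) F)) : Set (Matrix (Fin n) (Fin n) F) :=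
  {M | ∃ X ∈ nn, M = 1 + X}

/-- The two sided orbit `H X H ⊆ 𝔫` of `X`. -/
def algBiOrbit (nn : Submodule F (Matrix (Fin n) (Fin n) F))
    (X : Matrix (Fin n) (Fin n) F) : Set nn :=
  {Y | ∃ u ∈ algH nn, ∃ v ∈ algH nn, (Y : Matrix (Fin n) (Fin n) F) = u * X * v}

/-- The right orbit `{λ · u : u ∈ H} ⊆ 𝔫*` of a functional `λ`, described via
`λ' = λ · u⁻¹ ↔ (∀ Y, λ' Y = λ (Y u))`. -/
def algRightOrbit (nn : Submodule F (Matrix (Fin n) (Fin n) F))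
    (l : Module.Dual F nn) : Set (Module.Dual F nn) :=
  {l' | ∃ u ∈ algH nn, ∀ (Y : nn) (h : (Y : Matrix (Fin n) (Fin n) F) * u ∈ nn),
      l' Y = l ⟨(Y : Matrix (Fin n) (Fin n) F) * u, h⟩}

/-- The supercharacter `χ^λ` of an algebra group, evaluated at `1 + X`. -/
noncomputable def algSuperchar (nn : Submodule F (Matrix (Fin n) (Fin n) F))
    (θ : AddChar F ℂ) (l : Module.Dual F nn) (X : Matrix (Fin n) (Fin n) F) : ℂ :=
  ((Nat.card (algRightOrbit nn l) : ℂ) / (Nat.card (algBiOrbit nn X) : ℂ)) *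
    ∑ᶠ Y ∈ algBiOrbit nn X, (starRingEnd ℂ) (θ (l Y))

/-! Algebra groups with a fixed basis `X_1, …, X_d` of `𝔫`. -/

/-- `X_ρ = Σ_i ρ_i X_i`. -/
def bigX {d : ℕ} (Xb : Fin d → Matrix (Fin n) (Fin n) F) (ρ : Fin d → F) :
    Matrix (Fin n) (Fin n) F :=
  ∑ i : Fin d, ρ i • Xb i

/-- The two-sided orbit of `X_φ`, in coordinates. -/
def algCoeffBiOrbit {d : ℕ} (Xb : Fin d → Matrix (Fin n) (Fin n) F) (φ : Fin d → F) :
    Set (Fin d → F) :=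
  {ρ | ∃ ζ₁ ζ₂ : Fin d → F,
      (1 + bigX Xb ζ₁) * bigX Xb φ * (1 + bigX Xb ζ₂) = bigX Xb ρ}

/-- The right orbit of `λ_η`, in coordinates (`λ_η(X_ν) = η ⬝ᵥ ν`). -/
def algCoeffRightOrbit {d : ℕ} (Xb : Fin d → Matrix (Fin n) (Fin n) F) (η : Fin d → F) :
    Set (Fin d → F) :=
  {η' | ∃ ζ : Fin d → F, ∀ ρ ν : Fin d → F,
      bigX Xb ρ * (1 + bigX Xb ζ) = bigX Xb ν → η' ⬝ᵥ ρ = η ⬝ᵥ ν}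

/-- The supercharacter `χ^η` of an algebra group with fixed basis, evaluated at `x_φ`. -/
noncomputable def algCoeffSuperchar {d : ℕ} (Xb : Fin d → Matrix (Fin n) (Fin n) F)
    (θ : AddChar F ℂ) (η φ : Fin d → F) : ℂ :=
  ((Nat.card (algCoeffRightOrbit Xb η) : ℂ) / (Nat.card (algCoeffBiOrbit Xb φ) : ℂ)) *
    ∑ᶠ ρ ∈ algCoeffBiOrbit Xb φ, (starRingEnd ℂ) (θ (η ⬝ᵥ ρ))

/-- `(C_i)_{jk} = c_{ij}^k`. -/
def Cleft {d : ℕ} (c : Fin d → Fin d → Fin d → F) (i : Fin d) : Matrix (Fin d) (Fin d) F :=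
  Matrix.of fun j k => c i j k

/-- `(C^j)_{ik} = c_{ij}^k`. -/
def Cright {d : ℕ} (c : Fin d → Fin d → Fin d → F) (j : Fin d) : Matrix (Fin d) (Fin d) F :=
  Matrix.of fun i k => c i j k

/-- `(M_φ^η)_{ij} = φ C_i C^j η`. -/
def algMmesh {d : ℕ} (c : Fin d → Fin d → Fin d → F) (φ η : Fin d → F) :
    Matrix (Fin d) (Fin d) F :=
  Matrix.of fun i j => φ ⬝ᵥ (Cleft c i * Cright c j).mulVec η

/-- `(a_φ^η)_i = φ C_i η`. -/
def algAVec {d : ℕ} (c : Fin d → Fin d → Fin d → F) (φ η : Fin d → F) : Fin d → F :=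
  fun i => φ ⬝ᵥ (Cleft c i).mulVec η

/-- `(b_φ^η)_j = φ C^j η`. -/
def algBVec {d : ℕ} (c : Fin d → Fin d → Fin d → F) (φ η : Fin d → F) : Fin d → F :=
  fun j => φ ⬝ᵥ (Cright c j).mulVec η

/-- `φ` meshes with `η` (algebra-group version). -/
def algMeshes {d : ℕ} (c : Fin d → Fin d → Fin d → F) (φ η : Fin d → F) : Prop :=
  (∃ b : Fin d → F, (algMmesh c φ η).mulVec b = -algAVec c φ η) ∧
  ∀ v : Fin d → F, (algMmesh c φ η).mulVec v = 0 → algBVec c φ η ⬝ᵥ v = 0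

section PatternAlgebra

variable {K : Type*} [Field K] {J : Finset (Pr n)}

theorem mul_mem_nJset (hJ : Closed J) {A B : Matrix (Fin n) (Fin n) K}
    (hA : A ∈ nJset J) (hB : B ∈ nJset J) : A * B ∈ nJset J := by
  intro a b hab
  rw [Matrix.mul_apply]
  refine Finset.sum_eq_zero fun c _ => ?_
  by_cases hac : (a, c) ∈ J
  · rw [hB c b fun hcb => hab (hJ.2 a c b hac hcb), mul_zero]
  · rw [hA a c hac, zero_mul]

theorem Xmat_mem_nJset (φ : Pr n → K) : Xmat J φ ∈ nJset J := fun _ _ h => if_neg h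

theorem single_mem_nJset {j k : Fin n} (hjk : (j, k) ∈ J) (c : K) :
    Matrix.single j k c ∈ nJset J := by
  intro a b hab
  rw [Matrix.single_apply, if_neg]
  rintro ⟨rfl, rfl⟩
  exact hab hjk

theorem Xmat_piSingle {j k : Fin n} (hjk : (j, k) ∈ J) (c : K) :
    Xmat J (Pi.single (j, k) c) = Matrix.single j k c := by
  ext a b
  rcases eq_or_ne (a, b) (j, k) with h | h
  · obtain ⟨rfl, rfl⟩ := Prod.mk.inj h
    simp [Xmat, hjk]
  · rw [Matrix.single_apply, if_neg fun h' => h (by rw [h'.1, h'.2])]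
    simp [Xmat, Pi.single_eq_of_ne h]

theorem lam_add (η : Pr n → K) (A B : Matrix (Fin n) (Fin n) K) :
    lam J η (A + B) = lam J η A + lam J η B := by
  simp only [lam, Matrix.add_apply, mul_add, Finset.sum_add_distrib]

theorem lam_eq_sum_of_mem_nJset (η : Pr n → K) {M : Matrix (Fin n) (Fin n) K}
    (hM : M ∈ nJset J) : lam J η M = ∑ a, ∑ b, η (a, b) * M a b := by
  rw [← Fintype.sum_prod_type', lam]
  refine Finset.sum_subset (Finset.subset_univ J) fun p _ hp => ?_
  rw [hM p.1 p.2 hp, mul_zero]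

theorem lam_single {j k : Fin n} (hjk : (j, k) ∈ J) (η : Pr n → K) :
    lam J η (Matrix.single j k 1) = η (j, k) := by
  rw [lam_eq_sum_of_mem_nJset η (single_mem_nJset hjk 1)]
  simp [Matrix.single_apply, ite_and]

theorem lam_mul_single (hJ : Closed J) {A : Matrix (Fin n) (Fin n) K} (hA : A ∈ nJset J)
    {j k : Fin n} (hjk : (j, k) ∈ J) (η : Pr n → K) :
    lam J η (A * Matrix.single j k 1) = ∑ i, A i j * η (i, k) := by
  rw [lam_eq_sum_of_mem_nJset η (mul_mem_nJset hJ hA (single_mem_nJset hjk 1))]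
  simp [Matrix.mul_apply, Matrix.single_apply, ite_and, mul_comm]

theorem lam_single_mul (hJ : Closed J) {B : Matrix (Fin n) (Fin n) K} (hB : B ∈ nJset J)
    {j k : Fin n} (hjk : (j, k) ∈ J) (η : Pr n → K) :
    lam J η (Matrix.single j k 1 * B) = ∑ l, η (j, l) * B k l := by
  rw [lam_eq_sum_of_mem_nJset η (mul_mem_nJset hJ (single_mem_nJset hjk 1) hB)]
  simp [Matrix.mul_apply, Matrix.single_apply, ite_and]

theorem mul_single_mul_apply (A B : Matrix (Fin n) (Fin n) K) (j k : Fin n) (c : K)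
    (a b : Fin n) :
    (A * Matrix.single j k c * B) a b = A a j * c * B k b := by
  rw [Matrix.mul_apply, Finset.sum_eq_single k]
  · rw [Matrix.mul_single_apply_same]
  · intro l _ hl
    rw [Matrix.mul_single_apply_of_ne _ _ _ _ _ hl, zero_mul]
  · simp

theorem lam_mul_single_mul (hJ : Closed J) {A B : Matrix (Fin n) (Fin n) K} (hA : A ∈ nJset J)
    (hB : B ∈ nJset J) {j k : Fin n} (hjk : (j, k) ∈ J) (η : Pr n → K) :
    lam J η (A * Matrix.single j k 1 * B) = ∑ i, ∑ l, A i j * η (i, l) * B k l := by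
  rw [lam_eq_sum_of_mem_nJset η
    (mul_mem_nJset hJ (mul_mem_nJset hJ hA (single_mem_nJset hjk 1)) hB)]
  refine Finset.sum_congr rfl fun a _ => Finset.sum_congr rfl fun b _ => ?_
  rw [mul_single_mul_apply]
  ring

end PatternAlgebra

theorem stmt9_general {F : Type*} [Field F] {n : ℕ}
    (J : Finset (Pr n)) (hJ : Closed J) (η τ ρ η' : Pr n → F)
    (h : ∀ φ : Pr n → F,
      lam J η' (Xmat J φ) = lam J η (xmat J τ * Xmat J φ * xmat J ρ)) :
    ∀ p ∈ J, η' p = η p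
      + (∑ i : Fin n, if (i, p.1) ∈ J ∧ (p.1, p.2) ∈ J then τ (i, p.1) * η (i, p.2) else 0)
      + (∑ l : Fin n, if (p.1, p.2) ∈ J ∧ (p.2, l) ∈ J then η (p.1, l) * ρ (p.2, l) else 0)
      + ∑ i : Fin n, ∑ l : Fin n,
          if (i, p.1) ∈ J ∧ (p.1, p.2) ∈ J ∧ (p.2, l) ∈ J then
            τ (i, p.1) * η (i, l) * ρ (p.2, l) else 0 := by
  rintro ⟨j, k⟩ hjk
  have hT : Xmat J τ ∈ nJset J := Xmat_mem_nJset τ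
  have hR : Xmat J ρ ∈ nJset J := Xmat_mem_nJset ρ
  have key := h (Pi.single (j, k) 1)
  simp only [Xmat_piSingle hjk, xmat, add_mul, mul_add, one_mul, mul_one, lam_add,
    lam_single hjk, lam_mul_single hJ hT hjk, lam_single_mul hJ hR hjk,
    lam_mul_single_mul hJ hT hR hjk] at key
  rw [key]
  simp only [Xmat, Matrix.of_apply, hjk, true_and, ite_mul, mul_ite, zero_mul,
    mul_zero, ← ite_and, add_assoc, and_comm]

theorem stmt9 {F : Type*} [Field F] [Fintype F] [DecidableEq F] {n : ℕ}
    (J : Finset (Pr n)) (hJ : Closed J) (η τ ρ η' : Pr n → F)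
    (h : ∀ φ : Pr n → F,
      lam J η' (Xmat J φ) = lam J η (xmat J τ * Xmat J φ * xmat J ρ)) :
    ∀ p ∈ J, η' p = η p
      + (∑ i : Fin n, if (i, p.1) ∈ J ∧ (p.1, p.2) ∈ J then τ (i, p.1) * η (i, p.2) else 0)
      + (∑ l : Fin n, if (p.1, p.2) ∈ J ∧ (p.2, l) ∈ J then η (p.1, l) * ρ (p.2, l) else 0)
      + ∑ i : Fin n, ∑ l : Fin n,
          if (i, p.1) ∈ J ∧ (p.1, p.2) ∈ J ∧ (p.2, l) ∈ J then
            τ (i, p.1) * η (i, l) * ρ (p.2, l) else 0 :=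
  stmt9_general J hJ η τ ρ η' h

end SCT
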